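/- arXiv:2605.18604 — 5 statements merged into one kernel-verified Lean document; each statement's English description precedes it below -/
import Mathlib

section
/- Let $\mu > 0$ and $\delta > 0$, and let $\xi \le \frac{\mu\delta}{\mu+\delta}$. Let $E$ be a real inner product space with norm $\|\cdot\|$, and let $v, w^+, \tilde w \in E$ and $g \in E$ satisfy: (i) $\|g\| \le \xi \|v - \tilde w\|$, and (ii) $\|g\| \ge \mu \|w^+ - \tilde w\|$. Then $\|g\| \le \delta \|w^+ - v\|$. -/
theorem stmt_0 {E : Type*} [NormedAddCommGroup E] [InnerProductSpace ℝ E]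
    (μ δ ξ : ℝ) (hμ : 0 < μ) (hδ : 0 < δ) (hξ : ξ ≤ μ * δ / (μ + δ))
    (v wplus wtilde g : E)
    (h1 : ‖g‖ ≤ ξ * ‖v - wtilde‖)
    (h2 : μ * ‖wplus - wtilde‖ ≤ ‖g‖) :
    ‖g‖ ≤ δ * ‖wplus - v‖ := by
  have hg : 0 ≤ ‖g‖ := norm_nonneg g
  have hc : 0 ≤ ‖wplus - v‖ := norm_nonneg _
  rcases le_or_gt ξ 0 with hξ0 | hξ0
  · have : ‖g‖ ≤ 0 := h1.trans (mul_nonpos_of_nonpos_of_nonneg hξ0 (norm_nonneg _))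
    nlinarith
  have htri : ‖v - wtilde‖ ≤ ‖wplus - wtilde‖ + ‖wplus - v‖ := by
    have := norm_sub_le_norm_sub_add_norm_sub v wplus wtilde
    have h := norm_sub_rev v wplus
    linarith
  have hξ' : ξ * (μ + δ) ≤ μ * δ := by
    rw [le_div_iff₀ (by positivity)] at hξ
    exact hξ
  have hξμ : ξ < μ := by nlinarith
  have key : (μ - ξ) * ‖g‖ ≤ μ * ξ * ‖wplus - v‖ := by
    nlinarith [mul_le_mul_of_nonneg_left htri (mul_nonneg hμ.le hξ0.le),
      mul_le_mul_of_nonneg_left h1 hμ.le, mul_le_mul_of_nonneg_left h2 hξ0.le]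
  have key2 : μ * ξ * ‖wplus - v‖ ≤ (μ - ξ) * (δ * ‖wplus - v‖) := by
    nlinarith
  exact le_of_mul_le_mul_left (key.trans key2) (by linarith)
end

section
/- Let $E$ be a real Hilbert space, $Q \subseteq E$ nonempty closed convex, and let sequences $(z^{t+1})_{t\ge 0} \subseteq Q$, $(g^{t+1})_{t\ge 0} \subseteq E$, $(v^t)_{t\ge 0} \subseteq Q$ satisfy: $v^{t+1} = \operatorname{argmin}_{v\in Q}[a_{t+1}\langle g^{t+1}, v\rangle + \frac12\|v - v^t\|^2]$ with $a_{t+1} = \frac{2\langle g^{t+1}, v^t - z^{t+1}\rangle}{\|g^{t+1}\|^2} \ge 0$ and $g^{t+1} \ne 0$. Then for every $v \in Q$ and every $T \ge 1$: $\sum_{t=0}^{T-1} a_{t+1}\langle g^{t+1}, z^{t+1} - v\rangle \le \frac12\|v^0 - v\|^2 - \frac12\|v^T - v\|^2$. -/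
/-!
Each step of the method is a proximal step from `v t` with linear term `a (t+1) • g (t+1)`, so
its first-order optimality condition gives the three-point inequality
`a⟪g, v' - w⟫ ≤ ½‖v - w‖² - ½‖v' - w‖² - ½‖v' - v‖²`. Splitting `z - w = (z - v) + (v - v') + (v' - w)`,
the middle term costs at most `a²‖g‖²/2 + ½‖v' - v‖²` by Young's inequality, and the step size
is chosen exactly so that `a⟪g, z - v⟫ = -a²‖g‖²/2` cancels it. Summing the resulting one-step
bounds telescopes.
-/

open scoped RealInnerProductSpace

section
variable {E : Type*} [NormedAddCommGroup E] [InnerProductSpace ℝ E]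

theorem Convex.inner_add_sub_nonneg_of_isMinOn {Q : Set E} (hQ : Convex ℝ Q) {g c x w : E}
    (hx : x ∈ Q) (hw : w ∈ Q) (hmin : IsMinOn (fun y ↦ ⟪g, y⟫ + 1 / 2 * ‖y - c‖ ^ 2) Q x) :
    0 ≤ ⟪g + (x - c), w - x⟫ := by
  have hderiv := ((innerSL ℝ g).hasFDerivAt (x := x)).add
    ((((hasFDerivAt_id x).sub_const c).norm_sq).const_mul (1 / 2))
  have hcone : w - x ∈ posTangentConeAt Q x :=
    sub_mem_posTangentConeAt_of_segment_subset (hQ.segment_subset hx hw)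
  have := hmin.localize.hasFDerivWithinAt_nonneg hderiv.hasFDerivWithinAt hcone
  simp only [id_eq, ContinuousLinearMap.comp_id, add_apply, coe_innerSL_apply, smul_apply,
    nsmul_eq_mul, Nat.cast_ofNat, smul_eq_mul] at this
  rw [inner_add_left]
  linarith

theorem Convex.inner_sub_le_of_isMinOn {Q : Set E} (hQ : Convex ℝ Q) {g c x w : E}
    (hx : x ∈ Q) (hw : w ∈ Q) (hmin : IsMinOn (fun y ↦ ⟪g, y⟫ + 1 / 2 * ‖y - c‖ ^ 2) Q x) :
    ⟪g, x - w⟫ ≤ 1 / 2 * ‖c - w‖ ^ 2 - 1 / 2 * ‖x - w‖ ^ 2 - 1 / 2 * ‖x - c‖ ^ 2 := by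
  have hvi := hQ.inner_add_sub_nonneg_of_isMinOn hx hw hmin
  have hpolar : ‖c - w‖ ^ 2 = ‖x - c‖ ^ 2 + 2 * ⟪x - c, w - x⟫ + ‖x - w‖ ^ 2 := by
    rw [norm_sub_rev c, norm_sub_rev x w, ← norm_add_sq_real]
    congr 2
    abel
  have hflip : ⟪g, w - x⟫ = -⟪g, x - w⟫ := by rw [← inner_neg_right, neg_sub]
  rw [inner_add_left, hflip] at hvi
  linarith

theorem mul_inner_sub_eq_of_eq_div {g x z : E} {a : ℝ} (ha : a = 2 * ⟪g, x - z⟫ / ‖g‖ ^ 2) :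
    a * ⟪g, z - x⟫ = -(a ^ 2 / 2 * ‖g‖ ^ 2) := by
  rcases eq_or_ne g 0 with rfl | hg
  · simp
  · rw [show z - x = -(x - z) by abel, inner_neg_right, ha]
    field_simp

theorem mul_inner_le_sq_mul_norm_sq_add (a : ℝ) (g d : E) :
    a * ⟪g, d⟫ ≤ a ^ 2 / 2 * ‖g‖ ^ 2 + 1 / 2 * ‖d‖ ^ 2 := by
  have h := norm_sub_sq_real (a • g) d
  rw [norm_smul, real_inner_smul_left, mul_pow, Real.norm_eq_abs, sq_abs] at h
  linarith [sq_nonneg ‖a • g - d‖]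

theorem Convex.mul_inner_sub_le_of_isMinOn_of_eq_div {Q : Set E} (hQ : Convex ℝ Q)
    {g x x' z w : E} {a : ℝ} (hx' : x' ∈ Q) (hw : w ∈ Q)
    (ha : a = 2 * ⟪g, x - z⟫ / ‖g‖ ^ 2)
    (hmin : IsMinOn (fun y ↦ a * ⟪g, y⟫ + 1 / 2 * ‖y - x‖ ^ 2) Q x') :
    a * ⟪g, z - w⟫ ≤ 1 / 2 * ‖x - w‖ ^ 2 - 1 / 2 * ‖x' - w‖ ^ 2 := by
  have hprox := hQ.inner_sub_le_of_isMinOn (g := a • g) hx' hw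
    (by simpa only [real_inner_smul_left] using hmin)
  rw [real_inner_smul_left] at hprox
  have hstep := mul_inner_sub_eq_of_eq_div ha
  have hyoung := mul_inner_le_sq_mul_norm_sq_add a g (x - x')
  have hsplit : ⟪g, z - w⟫ = ⟪g, z - x⟫ + ⟪g, x - x'⟫ + ⟪g, x' - w⟫ := by
    rw [← inner_add_right, ← inner_add_right]
    abel_nf
  rw [norm_sub_rev x x'] at hyoung
  rw [hsplit]
  linarith

end

theorem stmt_4_general {E : Type*} [NormedAddCommGroup E] [InnerProductSpace ℝ E]
    (Q : Set E) (hQconv : Convex ℝ Q)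
    (z g : ℕ → E) (v : ℕ → E) (a : ℕ → ℝ)
    (hv : ∀ t, v t ∈ Q)
    (ha : ∀ t, a (t + 1)
      = 2 * (inner ℝ (g (t + 1)) (v t - z (t + 1)) : ℝ) / ‖g (t + 1)‖ ^ 2)
    (hmin : ∀ t, ∀ w ∈ Q,
      a (t + 1) * inner ℝ (g (t + 1)) (v (t + 1))
          + (1 / 2) * ‖v (t + 1) - v t‖ ^ 2
        ≤ a (t + 1) * inner ℝ (g (t + 1)) w + (1 / 2) * ‖w - v t‖ ^ 2) :
    ∀ w ∈ Q, ∀ T : ℕ, 1 ≤ T →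
      ∑ t ∈ Finset.range T, a (t + 1) * (inner ℝ (g (t + 1)) (z (t + 1) - w) : ℝ)
        ≤ (1 / 2) * ‖v 0 - w‖ ^ 2 - (1 / 2) * ‖v T - w‖ ^ 2 := by
  intro w hw T _
  calc ∑ t ∈ Finset.range T, a (t + 1) * ⟪g (t + 1), z (t + 1) - w⟫
      ≤ ∑ t ∈ Finset.range T, (1 / 2 * ‖v t - w‖ ^ 2 - 1 / 2 * ‖v (t + 1) - w‖ ^ 2) :=
        Finset.sum_le_sum fun t _ ↦ hQconv.mul_inner_sub_le_of_isMinOn_of_eq_div (hv (t + 1)) hw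
          (ha t) (isMinOn_iff.mpr (hmin t))
    _ = 1 / 2 * ‖v 0 - w‖ ^ 2 - 1 / 2 * ‖v T - w‖ ^ 2 :=
        Finset.sum_range_sub' (fun t ↦ 1 / 2 * ‖v t - w‖ ^ 2) T

theorem stmt_4 {E : Type*} [NormedAddCommGroup E] [InnerProductSpace ℝ E]
    [CompleteSpace E]
    (Q : Set E) (hQne : Q.Nonempty) (hQc : IsClosed Q) (hQconv : Convex ℝ Q)
    (z g : ℕ → E) (v : ℕ → E) (a : ℕ → ℝ)
    (hz : ∀ t, z (t + 1) ∈ Q) (hv : ∀ t, v t ∈ Q)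
    (hgne : ∀ t, g (t + 1) ≠ 0)
    (ha : ∀ t, a (t + 1)
      = 2 * (inner ℝ (g (t + 1)) (v t - z (t + 1)) : ℝ) / ‖g (t + 1)‖ ^ 2)
    (hapos : ∀ t, 0 ≤ a (t + 1))
    (hmin : ∀ t, ∀ w ∈ Q,
      a (t + 1) * inner ℝ (g (t + 1)) (v (t + 1))
          + (1 / 2) * ‖v (t + 1) - v t‖ ^ 2
        ≤ a (t + 1) * inner ℝ (g (t + 1)) w + (1 / 2) * ‖w - v t‖ ^ 2) :
    ∀ w ∈ Q, ∀ T : ℕ, 1 ≤ T →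
      ∑ t ∈ Finset.range T, a (t + 1) * (inner ℝ (g (t + 1)) (z (t + 1) - w) : ℝ)
        ≤ (1 / 2) * ‖v 0 - w‖ ^ 2 - (1 / 2) * ‖v T - w‖ ^ 2 :=
  stmt_4_general Q hQconv z g v a hv ha hmin
end

section
/- Let $k \ge 1$, let $M_k \in \mathbb{R}^{k\times k}$ be the tridiagonal matrix with diagonal $2$ and off-diagonal $-1$, and $\gamma > 0$. Then $\min_{w \in \mathbb{R}^k} \big[ \langle w, M_k w\rangle - 2\gamma \langle w, e_1\rangle \big] = -\gamma^2 \frac{k}{k+1}$, attained at $w^* = \gamma M_k^{-1} e_1$ with coordinates $w^*_i = \gamma\frac{k+1-i}{k+1}$. -/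
/-!
For a positive semidefinite `M`, the function `⟨w, M w⟩ - 2 ⟨w, b⟩` is minimised at any
solution `x` of `M x = b`, with minimum `-⟨x, b⟩`: complete the square, `⟨w - x, M (w - x)⟩ ≥ 0`.
The matrix `M = tridiag(-1, 2, -1)` is `BᵀB` for the `(k + 1) × k` difference matrix `B`, hence
positive semidefinite. As a second difference with zero boundary values, `M` kills the interior
entries of the affine vector `wᵢ = γ (k - i) / (k + 1)`, which vanishes at the boundary index
`k`; at `i = 0` the missing neighbour leaves `2 w₀ - w₁ = γ`. So `M w = γ e₁`, and the minimum is
`-γ w₀ = -γ² k / (k + 1)`.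
-/

open Matrix Finset

theorem Matrix.PosSemidef.neg_dotProduct_le_of_mulVec_eq {ι : Type*} [Fintype ι]
    {M : Matrix ι ι ℝ} (hM : M.PosSemidef) {x b : ι → ℝ} (hx : M *ᵥ x = b) (w : ι → ℝ) :
    -(x ⬝ᵥ b) ≤ w ⬝ᵥ M *ᵥ w - 2 * (w ⬝ᵥ b) := by
  have hsymm : x ⬝ᵥ M *ᵥ w = w ⬝ᵥ b := by
    rw [dotProduct_mulVec, ← hM.isHermitian.eq, conjTranspose_eq_transpose_of_trivial,
      vecMul_transpose, dotProduct_comm, hx]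
  have hnonneg := hM.dotProduct_mulVec_nonneg (w - x)
  simp only [star_trivial, mulVec_sub, dotProduct_sub, sub_dotProduct, hsymm, hx] at hnonneg
  linarith

def dirichletLaplacian (k : ℕ) : Matrix (Fin k) (Fin k) ℝ := fun i j =>
  if i = j then 2 else if (i : ℕ) = (j : ℕ) + 1 ∨ (j : ℕ) = (i : ℕ) + 1 then -1 else 0

def diffMatrix (k : ℕ) : Matrix (Fin (k + 1)) (Fin k) ℝ := fun l i =>
  (if l = i.castSucc then 1 else 0) - (if l = i.succ then 1 else 0)

theorem transpose_diffMatrix_mul_self (k : ℕ) :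
    (diffMatrix k)ᵀ * diffMatrix k = dirichletLaplacian k := by
  ext i j
  simp only [mul_apply, transpose_apply, diffMatrix, mul_sub, mul_ite, mul_one, mul_zero,
    sum_sub_distrib, sum_ite_eq', mem_univ, if_true]
  simp only [dirichletLaplacian, Fin.ext_iff, Fin.val_succ, Fin.val_castSucc]
  split_ifs <;> first | omega | norm_num

theorem posSemidef_dirichletLaplacian (k : ℕ) : (dirichletLaplacian k).PosSemidef := by
  simpa [← transpose_diffMatrix_mul_self] using posSemidef_conjTranspose_mul_self (diffMatrix k)

theorem dirichletLaplacian_mulVec_apply {k : ℕ} (g : ℕ → ℝ) (i : Fin k) :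
    (dirichletLaplacian k *ᵥ fun j => g j) i =
      ∑ n ∈ range k, ((if n = i then 2 * g n else 0) - (if n = i + 1 then g n else 0)
        - (if n + 1 = i then g n else 0)) := by
  rw [mulVec, dotProduct, ← Fin.sum_univ_eq_sum_range]
  refine sum_congr rfl fun j _ => ?_
  simp only [dirichletLaplacian, Fin.ext_iff]
  split_ifs <;> first | omega | ring

theorem dirichletLaplacian_mulVec_affine {k : ℕ} (hk : 1 ≤ k) (a : ℝ) :
    (dirichletLaplacian k *ᵥ fun j => a * (k - j)) = (a * (k + 1)) • Pi.single ⟨0, hk⟩ 1 := by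
  ext ⟨_ | m, hi⟩ <;>
    rw [dirichletLaplacian_mulVec_apply (fun n : ℕ => a * (k - n))] <;>
    simp only [sum_sub_distrib, sum_ite_eq', mem_range, hi, if_true, Pi.smul_apply,
      Pi.single_apply, Fin.mk.injEq, Nat.add_right_cancel_iff, smul_eq_mul]
  · simp only [Nat.add_eq_zero_iff, one_ne_zero, and_false, if_false, sum_const_zero]
    split_ifs
    · push_cast; ring
    · obtain rfl : k = 1 := by omega
      push_cast; ring
  · rw [if_pos (show m < k by omega), if_neg m.add_one_ne_zero]
    split_ifs
    · push_cast; ring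
    · obtain rfl : k = m + 2 := by omega
      push_cast; ring

theorem stmt_12_general (k : ℕ) (hk : 1 ≤ k) (γ : ℝ)
    (M : Matrix (Fin k) (Fin k) ℝ)
    (hM : ∀ i j : Fin k,
      M i j = if i = j then 2
        else if (i : ℕ) = (j : ℕ) + 1 ∨ (j : ℕ) = (i : ℕ) + 1 then -1 else 0)
    (wstar : Fin k → ℝ)
    (hws : ∀ i : Fin k, wstar i = γ * (k - (i : ℕ)) / (k + 1)) :
    (∀ w : Fin k → ℝ,
      -γ ^ 2 * k / (k + 1) ≤ dotProduct w (M.mulVec w) - 2 * γ * w ⟨0, hk⟩) ∧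
    (dotProduct wstar (M.mulVec wstar) - 2 * γ * wstar ⟨0, hk⟩
      = -γ ^ 2 * k / (k + 1)) ∧
    (M.mulVec wstar = γ • (Pi.single ⟨0, hk⟩ 1 : Fin k → ℝ)) := by
  obtain rfl : M = dirichletLaplacian k := Matrix.ext hM
  obtain rfl : wstar = fun j : Fin k => γ / (k + 1) * (k - (j : ℕ)) :=
    funext fun j => by rw [hws]; ring
  have hMw : dirichletLaplacian k *ᵥ (fun j : Fin k => γ / (k + 1) * (k - (j : ℕ))) =
      γ • Pi.single ⟨0, hk⟩ 1 := by
    rw [dirichletLaplacian_mulVec_affine hk, div_mul_cancel₀ _ (by positivity)]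
  have hdot (w : Fin k → ℝ) : w ⬝ᵥ γ • Pi.single ⟨0, hk⟩ 1 = γ * w ⟨0, hk⟩ := by
    simp [dotProduct_single]
  refine ⟨fun w => ?_, ?_, hMw⟩
  · have hle := (posSemidef_dirichletLaplacian k).neg_dotProduct_le_of_mulVec_eq hMw w
    rw [hdot, hdot] at hle
    convert hle using 1 <;> push_cast <;> ring
  · rw [hMw, hdot]
    push_cast
    ring

theorem stmt_12 (k : ℕ) (hk : 1 ≤ k) (γ : ℝ) (hγ : 0 < γ)
    (M : Matrix (Fin k) (Fin k) ℝ)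
    (hM : ∀ i j : Fin k,
      M i j = if i = j then 2
        else if (i : ℕ) = (j : ℕ) + 1 ∨ (j : ℕ) = (i : ℕ) + 1 then -1 else 0)
    (wstar : Fin k → ℝ)
    (hws : ∀ i : Fin k, wstar i = γ * (k - (i : ℕ)) / (k + 1)) :
    (∀ w : Fin k → ℝ,
      -γ ^ 2 * k / (k + 1) ≤ dotProduct w (M.mulVec w) - 2 * γ * w ⟨0, hk⟩) ∧
    (dotProduct wstar (M.mulVec wstar) - 2 * γ * wstar ⟨0, hk⟩
      = -γ ^ 2 * k / (k + 1)) ∧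
    (M.mulVec wstar = γ • (Pi.single ⟨0, hk⟩ 1 : Fin k → ℝ)) :=
  stmt_12_general k hk γ M hM wstar hws
end

section
/- For any $L > 0$, $D > 0$, and integer $k$ with $1 \le k \le \frac{\min\{m-1, n\} - 1}{2}$, there exist a matrix $A \in \mathbb{R}^{m\times n}$ with operator norm $\|A\| \le L$ and a vector $b \in \mathbb{R}^m$ such that: (i) the linear system $Av = b$ has a solution $v^*$ with $\|v^*\| \le D$; and (ii) $\min_{v \in \mathcal{H}^k(A,b)} \frac{1}{2}\|Av - b\|^2 \ge \frac{3L^2 D^2}{32(k+1)^2}$, where $\mathcal{H}^k(A,b) = \operatorname{span}\{A^\top b, (A^\top A)A^\top b, \dots, (A^\top A)^{k-1} A^\top b\}$ is the $k$-th Krylov subspace. -/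
open Matrix

open Finset

namespace NesAux

def ext {n : ℕ} (v : Fin n → ℝ) (t : ℕ) : ℝ := if h : t < n then v ⟨t, h⟩ else 0

lemma ext_coe {n : ℕ} (v : Fin n → ℝ) (j : Fin n) : ext v (j : ℕ) = v j := by
  simp [ext]

lemma ext_eq {n : ℕ} (v : Fin n → ℝ) (t : ℕ) (h : t < n) : ext v t = v ⟨t, h⟩ := dif_pos h

lemma ext_eq_zero {n : ℕ} (v : Fin n → ℝ) (t : ℕ) (h : ¬ t < n) : ext v t = 0 := dif_neg h

lemma ext_sub {n : ℕ} (v w : Fin n → ℝ) (t : ℕ) :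
    ext (v - w) t = ext v t - ext w t := by
  unfold ext; split <;> simp

def B (m n r : ℕ) (c : ℝ) : Matrix (Fin m) (Fin n) ℝ :=
  fun i j => (if (i:ℕ) = (j:ℕ) ∧ (j:ℕ) < r then c else 0)
           - (if (i:ℕ) = (j:ℕ) + 1 ∧ (j:ℕ) < r then c else 0)

lemma B_mulVec {m n r : ℕ} {c : ℝ} (hrn : r ≤ n) (v : Fin n → ℝ) (i : Fin m) :
    (B m n r c).mulVec v i
      = c * ((if (i:ℕ) < r then ext v (i:ℕ) else 0)
           - (if 1 ≤ (i:ℕ) ∧ (i:ℕ) ≤ r then ext v ((i:ℕ) - 1) else 0)) := by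
  have h1 : ∑ j : Fin n, (if (i:ℕ) = (j:ℕ) ∧ (j:ℕ) < r then c else 0) * v j
      = if (i:ℕ) < r then c * ext v (i:ℕ) else 0 := by
    by_cases h : (i:ℕ) < r
    · have hn : (i:ℕ) < n := lt_of_lt_of_le h hrn
      rw [if_pos h]
      rw [Finset.sum_eq_single (⟨(i:ℕ), hn⟩ : Fin n)]
      · simp [h, ext, hn]
      · intro j _ hj
        have hc : ¬((i:ℕ) = (j:ℕ) ∧ (j:ℕ) < r) := by
          rintro ⟨h1, _⟩
          exact hj (Fin.ext h1.symm)
        simp [hc]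
      · intro h; exact absurd (Finset.mem_univ _) h
    · rw [if_neg h]
      apply Finset.sum_eq_zero
      intro j _
      have hc : ¬((i:ℕ) = (j:ℕ) ∧ (j:ℕ) < r) := by
        rintro ⟨h1, h2⟩; exact h (h1 ▸ h2)
      simp [hc]
  have h2 : ∑ j : Fin n, (if (i:ℕ) = (j:ℕ) + 1 ∧ (j:ℕ) < r then c else 0) * v j
      = if 1 ≤ (i:ℕ) ∧ (i:ℕ) ≤ r then c * ext v ((i:ℕ) - 1) else 0 := by
    by_cases h : 1 ≤ (i:ℕ) ∧ (i:ℕ) ≤ r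
    · have hn : (i:ℕ) - 1 < n := by omega
      rw [if_pos h]
      rw [Finset.sum_eq_single (⟨(i:ℕ) - 1, hn⟩ : Fin n)]
      · have hcond : (i:ℕ) = ((i:ℕ) - 1) + 1 ∧ (i:ℕ) - 1 < r := by omega
        rw [if_pos hcond]
        simp only [ext]
        rw [dif_pos hn]
      · intro j _ hj
        have hc : ¬((i:ℕ) = (j:ℕ) + 1 ∧ (j:ℕ) < r) := by
          rintro ⟨h1, _⟩
          exact hj (Fin.ext (show (j:ℕ) = (i:ℕ) - 1 by omega))
        simp [hc]
      · intro h; exact absurd (Finset.mem_univ _) h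
    · rw [if_neg h]
      apply Finset.sum_eq_zero
      intro j _
      have hc : ¬((i:ℕ) = (j:ℕ) + 1 ∧ (j:ℕ) < r) := by
        rintro ⟨h1, h2⟩; omega
      simp [hc]
  have : (B m n r c).mulVec v i
      = ∑ j : Fin n, ((if (i:ℕ) = (j:ℕ) ∧ (j:ℕ) < r then c else 0)
           - (if (i:ℕ) = (j:ℕ) + 1 ∧ (j:ℕ) < r then c else 0)) * v j := by
    simp [Matrix.mulVec, dotProduct, B]
  rw [this]
  simp only [sub_mul, Finset.sum_sub_distrib, h1, h2]
  split_ifs <;> ring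

lemma B_transpose_mulVec {m n r : ℕ} {c : ℝ} (hrm : r < m) (u : Fin m → ℝ) (j : Fin n) :
    (B m n r c).transpose.mulVec u j
      = if (j:ℕ) < r then c * (ext u (j:ℕ) - ext u ((j:ℕ)+1)) else 0 := by
  have h1 : ∑ i : Fin m, (if (i:ℕ) = (j:ℕ) ∧ (j:ℕ) < r then c else 0) * u i
      = if (j:ℕ) < r then c * ext u (j:ℕ) else 0 := by
    by_cases h : (j:ℕ) < r
    · have hn : (j:ℕ) < m := lt_trans h hrm
      rw [if_pos h]
      rw [Finset.sum_eq_single (⟨(j:ℕ), hn⟩ : Fin m)]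
      · simp [h, ext, hn]
      · intro i _ hi
        have hc : ¬((i:ℕ) = (j:ℕ) ∧ (j:ℕ) < r) := by
          rintro ⟨h1, _⟩
          exact hi (Fin.ext h1)
        simp [hc]
      · intro h; exact absurd (Finset.mem_univ _) h
    · rw [if_neg h]
      apply Finset.sum_eq_zero
      intro i _
      simp [h]
  have h2 : ∑ i : Fin m, (if (i:ℕ) = (j:ℕ) + 1 ∧ (j:ℕ) < r then c else 0) * u i
      = if (j:ℕ) < r then c * ext u ((j:ℕ)+1) else 0 := by
    by_cases h : (j:ℕ) < r
    · have hn : (j:ℕ) + 1 < m := by omega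
      rw [if_pos h]
      rw [Finset.sum_eq_single (⟨(j:ℕ)+1, hn⟩ : Fin m)]
      · simp [h, ext, hn]
      · intro i _ hi
        have hc : ¬((i:ℕ) = (j:ℕ)+1 ∧ (j:ℕ) < r) := by
          rintro ⟨h1, _⟩
          exact hi (Fin.ext h1)
        simp [hc]
      · intro h; exact absurd (Finset.mem_univ _) h
    · rw [if_neg h]
      apply Finset.sum_eq_zero
      intro i _
      simp [h]
  have : (B m n r c).transpose.mulVec u j
      = ∑ i : Fin m, ((if (i:ℕ) = (j:ℕ) ∧ (j:ℕ) < r then c else 0)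
           - (if (i:ℕ) = (j:ℕ) + 1 ∧ (j:ℕ) < r then c else 0)) * u i := by
    simp [Matrix.mulVec, dotProduct, B, Matrix.transpose]
  rw [this]
  simp only [sub_mul, Finset.sum_sub_distrib, h1, h2]
  split_ifs <;> ring

def supp (n k : ℕ) : Submodule ℝ (Fin n → ℝ) where
  carrier := {v | ∀ j : Fin n, k ≤ (j:ℕ) → v j = 0}
  add_mem' := by intro a b ha hb j hj; simp [Pi.add_apply, ha j hj, hb j hj]
  zero_mem' := by intro j hj; rfl
  smul_mem' := by intro t a ha j hj; simp [ha j hj]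

lemma mem_supp {n k : ℕ} (v : Fin n → ℝ) :
    v ∈ supp n k ↔ ∀ j : Fin n, k ≤ (j:ℕ) → v j = 0 := Iff.rfl

lemma sum_sq_nat (r : ℕ) :
    6 * (∑ t ∈ range r, ((t:ℝ)+1)^2) = (r:ℝ)*((r:ℝ)+1)*(2*(r:ℝ)+1) := by
  induction r with
  | zero => simp
  | succ r ih =>
    rw [Finset.sum_range_succ, mul_add, ih]
    push_cast
    ring

lemma sum_sq_rev (r : ℕ) :
    (∑ t ∈ range r, ((r:ℝ) - t)^2) = ∑ t ∈ range r, ((t:ℝ)+1)^2 := by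
  rw [← Finset.sum_range_reflect (fun t => ((t:ℝ)+1)^2) r]
  apply Finset.sum_congr rfl
  intro t ht
  have htr : t < r := Finset.mem_range.1 ht
  have hcast : ((r - 1 - t : ℕ) : ℝ) = (r:ℝ) - 1 - t := by
    have h' : (1:ℕ) + t ≤ r := by omega
    rw [Nat.sub_sub, Nat.cast_sub h']
    push_cast; ring
  rw [hcast]; ring

end NesAux

/-- The `k`-th Krylov subspace `span {Aᵀb, (AᵀA)Aᵀb, …, (AᵀA)^(k-1)Aᵀb}`. -/
def krylov {m n : ℕ} (A : Matrix (Fin m) (Fin n) ℝ) (b : Fin m → ℝ) (k : ℕ) :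
    Submodule ℝ (Fin n → ℝ) :=
  Submodule.span ℝ
    (Set.range fun i : Fin k => ((A.transpose * A) ^ (i : ℕ)).mulVec (A.transpose.mulVec b))

open NesAux in
set_option maxHeartbeats 1600000 in
theorem stmt_13 (L D : ℝ) (hL : 0 < L) (hD : 0 < D)
    (m n k : ℕ) (hk1 : 1 ≤ k) (hkm : 2 * k + 2 ≤ m) (hkn : 2 * k + 1 ≤ n) :
    ∃ (A : Matrix (Fin m) (Fin n) ℝ) (b : Fin m → ℝ),
      (∀ v : Fin n → ℝ,
        Real.sqrt (∑ i, (A.mulVec v i) ^ 2) ≤ L * Real.sqrt (∑ j, (v j) ^ 2)) ∧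
      (∃ vstar : Fin n → ℝ, A.mulVec vstar = b ∧
        Real.sqrt (∑ j, (vstar j) ^ 2) ≤ D) ∧
      (∀ v ∈ krylov A b k,
        3 * L ^ 2 * D ^ 2 / (32 * (k + 1) ^ 2)
          ≤ (1 / 2) * ∑ i, (A.mulVec v i - b i) ^ 2) := by
  classical
  set r := 2*k+1 with hr
  have hrn : r ≤ n := hkn
  have hrm : r < m := by omega
  set c : ℝ := L/2 with hc
  have hcpos : 0 < c := by rw [hc]; positivity
  set Q : ℝ := (r:ℝ)*((r:ℝ)+1)*(2*(r:ℝ)+1) with hQ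
  have hQpos : 0 < Q := by rw [hQ]; positivity
  set α : ℝ := Real.sqrt (6*D^2/Q) with hα
  have hα2 : α^2 = 6*D^2/Q := Real.sq_sqrt (by positivity)
  set A := NesAux.B m n r c with hA
  set vstar : Fin n → ℝ := fun j => if (j:ℕ) < r then α * ((r:ℝ) - (j:ℕ)) else 0 with hvstar
  set b := A.mulVec vstar with hb
  have hb' : A.mulVec vstar = b := hb.symm
  clear_value c Q α A vstar b
  have hrR : ((r:ℕ):ℝ) = 2*(k:ℝ)+1 := by rw [hr]; push_cast; ring
  have hext_vstar : ∀ t : ℕ, ext vstar t = if t < r then α * ((r:ℝ) - t) else 0 := by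
    intro t
    by_cases h : t < n
    · rw [ext_eq _ _ h, hvstar]
    · rw [ext_eq_zero _ _ h, if_neg (by omega)]
  -- sums of squares over coordinates, transported to `range`
  have hsq_range : ∀ v : Fin n → ℝ, ∑ j, (v j)^2 = ∑ t ∈ range n, (ext v t)^2 := by
    intro v
    rw [← Fin.sum_univ_eq_sum_range (fun t => (ext v t)^2) n]
    exact Finset.sum_congr rfl fun j _ => by rw [ext_coe]
  refine ⟨A, b, ?_, ⟨vstar, hb', ?_⟩, ?_⟩
  · -- operator norm bound
    intro v
    have key : ∑ i, (A.mulVec v i)^2 ≤ L^2 * ∑ j, (v j)^2 := by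
      have h1 : ∑ i, (A.mulVec v i)^2
          = ∑ t ∈ range m, (c * ((if t < r then ext v t else 0)
              - (if 1 ≤ t ∧ t ≤ r then ext v (t-1) else 0)))^2 := by
        rw [← Fin.sum_univ_eq_sum_range (fun t => (c * ((if t < r then ext v t else 0)
              - (if 1 ≤ t ∧ t ≤ r then ext v (t-1) else 0)))^2) m]
        exact Finset.sum_congr rfl fun i _ => by rw [hA, B_mulVec hrn]
      have hS1 : ∑ t ∈ range m, (if t < r then ext v t else 0)^2
          ≤ ∑ t ∈ range n, (ext v t)^2 := by
        have e1 : ∑ t ∈ range r, (if t < r then ext v t else 0)^2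
            = ∑ t ∈ range m, (if t < r then ext v t else 0)^2 := by
          apply Finset.sum_subset (Finset.range_subset_range.2 hrm.le)
          intro t _ ht
          rw [if_neg (by simpa using ht)]
          simp
        rw [← e1]
        calc ∑ t ∈ range r, (if t < r then ext v t else 0)^2
            = ∑ t ∈ range r, (ext v t)^2 := by
              exact Finset.sum_congr rfl fun t ht => by
                rw [if_pos (Finset.mem_range.1 ht)]
          _ ≤ ∑ t ∈ range n, (ext v t)^2 :=
              Finset.sum_le_sum_of_subset_of_nonneg (Finset.range_subset_range.2 hrn)
                (fun _ _ _ => sq_nonneg _)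
      have hS2 : ∑ t ∈ range m, (if 1 ≤ t ∧ t ≤ r then ext v (t-1) else 0)^2
          ≤ ∑ t ∈ range n, (ext v t)^2 := by
        have e1 : ∑ t ∈ range (r+1), (if 1 ≤ t ∧ t ≤ r then ext v (t-1) else 0)^2
            = ∑ t ∈ range m, (if 1 ≤ t ∧ t ≤ r then ext v (t-1) else 0)^2 := by
          apply Finset.sum_subset (Finset.range_subset_range.2 (by omega))
          intro t _ ht
          rw [if_neg (by simp at ht; omega)]
          simp
        rw [← e1, Finset.sum_range_succ']
        have e2 : ∀ t ∈ range r, (if 1 ≤ t+1 ∧ t+1 ≤ r then ext v (t+1-1) else 0)^2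
            = (ext v t)^2 := by
          intro t ht
          rw [if_pos ⟨by omega, by have := Finset.mem_range.1 ht; omega⟩]
          simp
        rw [Finset.sum_congr rfl e2]
        simp only [if_neg (by omega : ¬(1 ≤ 0 ∧ 0 ≤ r))]
        calc ∑ t ∈ range r, (ext v t)^2 + (0:ℝ)^2
            = ∑ t ∈ range r, (ext v t)^2 := by simp
          _ ≤ ∑ t ∈ range n, (ext v t)^2 :=
              Finset.sum_le_sum_of_subset_of_nonneg (Finset.range_subset_range.2 hrn)
                (fun _ _ _ => sq_nonneg _)
      rw [h1, hsq_range v]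
      calc ∑ t ∈ range m, (c * ((if t < r then ext v t else 0)
              - (if 1 ≤ t ∧ t ≤ r then ext v (t-1) else 0)))^2
          ≤ ∑ t ∈ range m, (2*c^2*(if t < r then ext v t else 0)^2
              + 2*c^2*(if 1 ≤ t ∧ t ≤ r then ext v (t-1) else 0)^2) := by
            apply Finset.sum_le_sum
            intro t _
            nlinarith [sq_nonneg ((if t < r then ext v t else 0)
              + (if 1 ≤ t ∧ t ≤ r then ext v (t-1) else 0)), sq_nonneg c]
        _ = 2*c^2 * (∑ t ∈ range m, (if t < r then ext v t else 0)^2)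
              + 2*c^2 * (∑ t ∈ range m, (if 1 ≤ t ∧ t ≤ r then ext v (t-1) else 0)^2) := by
            rw [Finset.sum_add_distrib, Finset.mul_sum, Finset.mul_sum]
        _ ≤ 2*c^2 * (∑ t ∈ range n, (ext v t)^2) + 2*c^2 * (∑ t ∈ range n, (ext v t)^2) := by
            have h2c : (0:ℝ) ≤ 2*c^2 := by positivity
            exact add_le_add (mul_le_mul_of_nonneg_left hS1 h2c)
              (mul_le_mul_of_nonneg_left hS2 h2c)
        _ = L^2 * ∑ t ∈ range n, (ext v t)^2 := by rw [hc]; ring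
    have h := Real.sqrt_le_sqrt key
    rwa [Real.sqrt_mul (sq_nonneg L), Real.sqrt_sq hL.le] at h
  · -- ‖vstar‖ ≤ D
    have hsum : ∑ j, (vstar j)^2 = D^2 := by
      rw [hsq_range vstar]
      have e0 : ∀ t ∈ range n, (ext vstar t)^2
          = (if t < r then α * ((r:ℝ) - t) else 0)^2 := fun t _ => by rw [hext_vstar]
      rw [Finset.sum_congr rfl e0]
      have e1 : ∑ t ∈ range r, (if t < r then α * ((r:ℝ) - t) else 0)^2
          = ∑ t ∈ range n, (if t < r then α * ((r:ℝ) - t) else 0)^2 := by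
        apply Finset.sum_subset (Finset.range_subset_range.2 hrn)
        intro t _ ht
        rw [if_neg (by simpa using ht)]
        simp
      rw [← e1]
      have e2 : ∑ t ∈ range r, (if t < r then α * ((r:ℝ) - t) else 0)^2
          = α^2 * ∑ t ∈ range r, ((r:ℝ) - t)^2 := by
        rw [Finset.mul_sum]
        exact Finset.sum_congr rfl fun t ht => by
          rw [if_pos (Finset.mem_range.1 ht)]; ring
      rw [e2, sum_sq_rev]
      have e3 : ∑ t ∈ range r, ((t:ℝ)+1)^2 = Q/6 := by
        have := sum_sq_nat r
        rw [hQ]; linarith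
      have hQ0 : Q ≠ 0 := ne_of_gt hQpos
      rw [e3, hα2]
      field_simp
    rw [hsum, Real.sqrt_sq hD.le]
  · -- the main lower bound
    intro v hv
    have hAmul : ∀ (w : Fin n → ℝ) (i : Fin m), A.mulVec w i
        = c * ((if (i:ℕ) < r then ext w (i:ℕ) else 0)
             - (if 1 ≤ (i:ℕ) ∧ (i:ℕ) ≤ r then ext w ((i:ℕ)-1) else 0)) := by
      intro w i; rw [hA]; exact B_mulVec hrn w i
    have hATmul : ∀ (u : Fin m → ℝ) (j : Fin n), A.transpose.mulVec u j
        = if (j:ℕ) < r then c * (ext u (j:ℕ) - ext u ((j:ℕ)+1)) else 0 := by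
      intro u j; rw [hA]; exact B_transpose_mulVec hrm u j
    -- values of b on indices 1..r
    have hbval : ∀ s : ℕ, 1 ≤ s → s ≤ r → ext b s = -(c*α) := by
      intro s h1 h2
      have hsm : s < m := by omega
      rw [ext_eq _ _ hsm, hb, hAmul]
      simp only [Fin.val_mk]
      rw [hext_vstar, hext_vstar, if_pos (show 1 ≤ s ∧ s ≤ r from ⟨h1, h2⟩)]
      have hc1 : ((s-1:ℕ):ℝ) = (s:ℝ) - 1 := by
        rw [Nat.cast_sub h1]; norm_num
      by_cases hsr : s < r
      · rw [if_pos hsr, if_pos hsr, if_pos (show s-1 < r by omega), hc1]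
        ring
      · have hs : s = r := by omega
        have hsR : (s:ℝ) = (r:ℝ) := by rw [hs]
        rw [if_neg hsr, if_pos (show s-1 < r by omega), hc1, hsR]
        ring
    have main : ∀ i : ℕ, ∀ t : ℕ, i + 1 ≤ t →
        ext (((A.transpose * A) ^ i).mulVec (A.transpose.mulVec b)) t = 0 := by
      intro i
      induction i with
      | zero =>
        intro t ht
        rw [pow_zero, Matrix.one_mulVec]
        by_cases htn : t < n
        · rw [ext_eq _ _ htn, hATmul]
          simp only [Fin.val_mk]
          by_cases htr : t < r
          · rw [if_pos htr, hbval t ht (by omega), hbval (t+1) (by omega) (by omega)]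
            ring
          · rw [if_neg htr]
        · exact ext_eq_zero _ _ htn
      | succ i ih =>
        intro t ht
        have hrw : ((A.transpose * A) ^ (i+1)).mulVec (A.transpose.mulVec b)
            = A.transpose.mulVec (A.mulVec
                (((A.transpose * A) ^ i).mulVec (A.transpose.mulVec b))) := by
          rw [pow_succ']
          rw [← Matrix.mulVec_mulVec (M := A.transpose * A) (N := (A.transpose * A)^i)]
          rw [← Matrix.mulVec_mulVec (M := A.transpose) (N := A)]
        rw [hrw]
        set u := ((A.transpose * A) ^ i).mulVec (A.transpose.mulVec b) with hu
        have hAu : ∀ s : ℕ, i + 2 ≤ s → ext (A.mulVec u) s = 0 := by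
          intro s hs
          by_cases hsm : s < m
          · rw [ext_eq _ _ hsm, hAmul]
            simp only [Fin.val_mk]
            rw [ih s (by omega), ih (s-1) (by omega)]
            simp
          · exact ext_eq_zero _ _ hsm
        by_cases htn : t < n
        · rw [ext_eq _ _ htn, hATmul]
          simp only [Fin.val_mk]
          by_cases htr : t < r
          · rw [if_pos htr, hAu t (by omega), hAu (t+1) (by omega)]
            simp
          · rw [if_neg htr]
        · exact ext_eq_zero _ _ htn
    have hkry : ∀ j : Fin n, k ≤ (j:ℕ) → v j = 0 := by
      have hle : krylov A b k ≤ NesAux.supp n k := by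
        rw [krylov]
        apply Submodule.span_le.2
        rintro x ⟨i, rfl⟩
        rw [SetLike.mem_coe, mem_supp]
        intro j hj
        have h := main (i:ℕ) (j:ℕ) (by have := i.isLt; omega)
        rwa [ext_coe] at h
      exact (mem_supp v).1 (hle hv)
    have hsuppv : ∀ t : ℕ, k ≤ t → ext v t = 0 := by
      intro t ht
      by_cases h : t < n
      · rw [ext_eq _ _ h]; exact hkry ⟨t, h⟩ ht
      · exact ext_eq_zero _ _ h
    set d : Fin n → ℝ := v - vstar with hd
    have hdF : ∀ t : ℕ, k ≤ t → ext d t = if t < r then -(α * ((r:ℝ) - t)) else 0 := by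
      intro t ht
      rw [hd, ext_sub, hsuppv t ht, hext_vstar t, zero_sub]
      split_ifs <;> simp
    set E : ℕ → ℝ := fun t => (if t < r then ext d t else 0)
        - (if 1 ≤ t ∧ t ≤ r then ext d (t-1) else 0) with hE
    have hEdef : ∀ t : ℕ, E t = (if t < r then ext d t else 0)
        - (if 1 ≤ t ∧ t ≤ r then ext d (t-1) else 0) := fun t => by rw [hE]
    clear_value d E
    have hAd : ∀ i : Fin m, A.mulVec v i - b i = c * E (i:ℕ) := by
      intro i
      have h0 : A.mulVec v i - b i = A.mulVec d i := by
        rw [hb, hd, Matrix.mulVec_sub]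
        simp
      rw [h0, hAmul, hEdef]
    have hsum : ∑ i, (A.mulVec v i - b i)^2 = ∑ t ∈ range m, (c * E t)^2 := by
      rw [← Fin.sum_univ_eq_sum_range (fun t => (c * E t)^2) m]
      exact Finset.sum_congr rfl fun i _ => by rw [hAd i]
    have hE2 : ∀ s : ℕ, k+1 ≤ s → s ≤ r → E s = α := by
      intro s h1 h2
      have hs1 : k ≤ s - 1 := by omega
      have hcast : ((s-1:ℕ):ℝ) = (s:ℝ) - 1 := by
        rw [Nat.cast_sub (show 1 ≤ s by omega)]; norm_num
      have c1 : ext d (s-1) = -(α*((r:ℝ) - ((s-1:ℕ):ℝ))) := by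
        rw [hdF _ hs1, if_pos (show s-1 < r by omega)]
      rw [hEdef, if_pos (show 1 ≤ s ∧ s ≤ r from ⟨by omega, h2⟩), c1, hcast]
      by_cases hsr : s < r
      · rw [if_pos hsr, hdF s (by omega), if_pos hsr]
        ring
      · have hsR : (s:ℝ) = (r:ℝ) := by rw [show s = r by omega]
        rw [if_neg hsr, hsR]
        ring
    have htel : ∑ t ∈ range (k+1), E t = ext d k := by
      rw [Finset.sum_range_succ']
      have h0 : E 0 = ext d 0 := by
        rw [hEdef, if_pos (show 0 < r by omega), if_neg (by omega : ¬(1 ≤ 0 ∧ 0 ≤ r))]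
        ring
      have hstep : ∀ t ∈ range k, E (t+1) = ext d (t+1) - ext d t := by
        intro t ht
        have htk : t < k := Finset.mem_range.1 ht
        rw [hEdef, if_pos (show t+1 < r by omega),
          if_pos (show 1 ≤ t+1 ∧ t+1 ≤ r by omega)]
        simp
      rw [Finset.sum_congr rfl hstep, Finset.sum_range_sub (fun t => ext d t) k, h0]
      ring
    have hdk : ext d k = -(α*((k:ℝ)+1)) := by
      rw [hdF k le_rfl, if_pos (show k < r by omega), hrR]
      ring
    have hch1 : α^2*((k:ℝ)+1) ≤ ∑ t ∈ range (k+1), (E t)^2 := by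
      have hcs := Finset.sum_mul_sq_le_sq_mul_sq (range (k+1)) E (fun _ => (1:ℝ))
      simp only [mul_one, one_pow, Finset.sum_const, Finset.card_range, nsmul_eq_mul] at hcs
      rw [htel, hdk] at hcs
      have hkpos : (0:ℝ) < (k:ℝ)+1 := by positivity
      have hcast : ((k+1:ℕ):ℝ) = (k:ℝ)+1 := by push_cast; ring
      rw [hcast] at hcs
      nlinarith [hcs, hkpos]
    have hch2 : ∑ t ∈ range (k+1), (c*E ((k+1)+t))^2 = ((k:ℝ)+1)*(c*α)^2 := by
      have e0 : ∀ t ∈ range (k+1), (c*E ((k+1)+t))^2 = (c*α)^2 := by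
        intro t ht
        rw [hE2 ((k+1)+t) (by omega) (by have := Finset.mem_range.1 ht; omega)]
      rw [Finset.sum_congr rfl e0, Finset.sum_const, Finset.card_range, nsmul_eq_mul]
      push_cast
      ring
    have hlower : 2*c^2*α^2*((k:ℝ)+1) ≤ ∑ i, (A.mulVec v i - b i)^2 := by
      rw [hsum]
      have h1 : ∑ t ∈ range (r+1), (c*E t)^2 ≤ ∑ t ∈ range m, (c*E t)^2 :=
        Finset.sum_le_sum_of_subset_of_nonneg (Finset.range_subset_range.2 (by omega))
          (fun _ _ _ => sq_nonneg _)
      have hsplit : ∑ t ∈ range (r+1), (c*E t)^2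
          = ∑ t ∈ range (k+1), (c*E t)^2 + ∑ t ∈ range (k+1), (c*E ((k+1)+t))^2 := by
        rw [show r+1 = (k+1)+(k+1) by omega, Finset.sum_range_add]
      have hhead : c^2*(α^2*((k:ℝ)+1)) ≤ ∑ t ∈ range (k+1), (c*E t)^2 := by
        have e1 : ∑ t ∈ range (k+1), (c*E t)^2 = c^2 * ∑ t ∈ range (k+1), (E t)^2 := by
          rw [Finset.mul_sum]
          exact Finset.sum_congr rfl fun t _ => by ring
        rw [e1]
        exact mul_le_mul_of_nonneg_left hch1 (sq_nonneg c)
      calc 2*c^2*α^2*((k:ℝ)+1)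
          = c^2*(α^2*((k:ℝ)+1)) + ((k:ℝ)+1)*(c*α)^2 := by ring
        _ ≤ ∑ t ∈ range (k+1), (c*E t)^2 + ∑ t ∈ range (k+1), (c*E ((k+1)+t))^2 :=
            add_le_add hhead (le_of_eq hch2.symm)
        _ = ∑ t ∈ range (r+1), (c*E t)^2 := hsplit.symm
        _ ≤ ∑ t ∈ range m, (c*E t)^2 := h1
    have hfinal : 3 * L ^ 2 * D ^ 2 / (32 * ((k:ℝ) + 1) ^ 2) ≤ c^2*α^2*((k:ℝ)+1) := by
      have hK0 : (0:ℝ) ≤ (k:ℝ) := Nat.cast_nonneg k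
      have hQ0 : Q ≠ 0 := ne_of_gt hQpos
      rw [hα2, hc, div_le_iff₀ (by positivity : (0:ℝ) < 32*((k:ℝ)+1)^2)]
      have expand : (L/2)^2*(6*D^2/Q)*((k:ℝ)+1)*(32*((k:ℝ)+1)^2)
          = 48*L^2*D^2*((k:ℝ)+1)^3/Q := by ring
      rw [expand, le_div_iff₀ hQpos]
      have hQ' : Q = (2*(k:ℝ)+1)*((2*(k:ℝ)+1)+1)*(2*(2*(k:ℝ)+1)+1) := by rw [hQ, hrR]
      rw [hQ']
      have hkey : (2*(k:ℝ)+1)*((2*(k:ℝ)+1)+1)*(2*(2*(k:ℝ)+1)+1) ≤ 16*((k:ℝ)+1)^3 := by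
        nlinarith [hK0]
      have h3 : (0:ℝ) ≤ 3*L^2*D^2 := by positivity
      nlinarith [mul_le_mul_of_nonneg_left hkey h3]
    calc 3 * L ^ 2 * D ^ 2 / (32 * ((k:ℝ) + 1) ^ 2)
        ≤ c^2*α^2*((k:ℝ)+1) := hfinal
      _ ≤ (1/2) * ∑ i, (A.mulVec v i - b i)^2 := by linarith [hlower]
end

section
/- Let $E_x, E_y$ be real inner product spaces and equip $E = E_x \times E_y$ with the norm $\|(x,y)\|_E^2 = \alpha_x\|x\|^2 + \alpha_y\|y\|^2$ for $\alpha_x, \alpha_y > 0$, and the dual norm $\|(g_x,g_y)\|_{E^*}^2 = \alpha_x^{-1}\|g_x\|^2 + \alpha_y^{-1}\|g_y\|^2$. Suppose vectors $r_x \in E_x$, $r_y \in E_y$ and displacements $d_x \in E_x$, $d_y \in E_y$ satisfy $\|r_x\| \le \frac{\alpha_x\lambda}{2}\|d_x\| + L\|d_y\|$ and $\|r_y\| \le \frac{\alpha_y\lambda}{2}\|d_y\| + L\|d_x\|$, where $\lambda \ge \frac{2L}{\sqrt{\alpha_x\alpha_y}}$. Then $\|(r_x, r_y)\|_{E^*}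 \le \lambda \|(d_x, d_y)\|_E$. -/
theorem stmt_18 {Ex Ey : Type*}
    [NormedAddCommGroup Ex] [InnerProductSpace ℝ Ex]
    [NormedAddCommGroup Ey] [InnerProductSpace ℝ Ey]
    (αx αy L lam : ℝ) (hαx : 0 < αx) (hαy : 0 < αy) (hLnn : 0 ≤ L)
    (hlam : 2 * L / Real.sqrt (αx * αy) ≤ lam)
    (rx dx : Ex) (ry dy : Ey)
    (hrx : ‖rx‖ ≤ αx * lam / 2 * ‖dx‖ + L * ‖dy‖)
    (hry : ‖ry‖ ≤ αy * lam / 2 * ‖dy‖ + L * ‖dx‖) :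
    Real.sqrt (αx⁻¹ * ‖rx‖ ^ 2 + αy⁻¹ * ‖ry‖ ^ 2)
      ≤ lam * Real.sqrt (αx * ‖dx‖ ^ 2 + αy * ‖dy‖ ^ 2) := by
  set a := ‖rx‖ with ha
  set b := ‖dx‖ with hb
  set c := ‖ry‖ with hc
  set d := ‖dy‖ with hd
  have hspos : 0 < Real.sqrt (αx * αy) := Real.sqrt_pos.mpr (by positivity)
  have hlamnn : 0 ≤ lam := le_trans (by positivity) hlam
  have hsq : Real.sqrt (αx * αy) ^ 2 = αx * αy := Real.sq_sqrt (by positivity)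
  have h2L : 2 * L ≤ lam * Real.sqrt (αx * αy) := (div_le_iff₀ hspos).mp hlam
  have hlamsq : 4 * L ^ 2 ≤ lam ^ 2 * (αx * αy) := by
    nlinarith [mul_le_mul h2L h2L (by positivity) (mul_nonneg hlamnn hspos.le)]
  have ha0 : 0 ≤ a := norm_nonneg _
  have hb0 : 0 ≤ b := norm_nonneg _
  have hc0 : 0 ≤ c := norm_nonneg _
  have hd0 : 0 ≤ d := norm_nonneg _
  have h1 : a ^ 2 ≤ (αx * lam / 2 * b + L * d) ^ 2 :=
    pow_le_pow_left₀ ha0 hrx 2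
  have h2 : c ^ 2 ≤ (αy * lam / 2 * d + L * b) ^ 2 :=
    pow_le_pow_left₀ hc0 hry 2
  have key : αx⁻¹ * a ^ 2 + αy⁻¹ * c ^ 2 ≤ lam ^ 2 * (αx * b ^ 2 + αy * d ^ 2) := by
    rw [inv_eq_one_div, inv_eq_one_div, div_mul_eq_mul_div, div_mul_eq_mul_div,
      div_add_div _ _ (ne_of_gt hαx) (ne_of_gt hαy), div_le_iff₀ (by positivity)]
    nlinarith [sq_nonneg (αx * lam / 2 * b - L * d), sq_nonneg (αy * lam / 2 * d - L * b),
      mul_le_mul_of_nonneg_left h1 hαy.le, mul_le_mul_of_nonneg_left h2 hαx.le,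
      mul_nonneg (mul_nonneg hαx.le hαy.le) (sq_nonneg b),
      mul_nonneg (mul_nonneg hαx.le hαy.le) (sq_nonneg d),
      mul_le_mul_of_nonneg_right hlamsq (mul_nonneg hαy.le (sq_nonneg d)),
      mul_le_mul_of_nonneg_right hlamsq (mul_nonneg hαx.le (sq_nonneg b))]
  calc Real.sqrt (αx⁻¹ * a ^ 2 + αy⁻¹ * c ^ 2)
      ≤ Real.sqrt (lam ^ 2 * (αx * b ^ 2 + αy * d ^ 2)) := Real.sqrt_le_sqrt key
    _ = lam * Real.sqrt (αx * b ^ 2 + αy * d ^ 2) := by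
        rw [Real.sqrt_mul (sq_nonneg lam), Real.sqrt_sq hlamnn]
end
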